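/- Let N_t ≥ 1 be an integer, ρ > 0, and β = √(2ρ/N_t). Let (h_k, n_k), k = 1, 2, …, be i.i.d. pairs where h_k ∈ ℝ^{2N_t} has i.i.d. Gaussian coordinates with mean 0 and variance 1/2 and n_k is a real Gaussian with mean 0 and variance 1/2 independent of h_k. Let x, u ∈ ℝ^{2N_t} satisfy ‖x‖² = ‖u‖² = N_t and u ≠ x. Define y_k = √(ρ/N_t)·⟨h_k, x⟩ + n_k, s_k = sgn(y_k) (with sgn(r) = 1 if r ≥ 0 and −1 otherwise), and for v ∈ ℝ^{2N_t} let S_K(v) = ∑_{k=1}^{K} log Φ(β·s_k·⟨h_k, v⟩). Then P(S_K(x) > S_K(u)) → 1 as K → ∞. -/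

import Mathlib

/-!
Write `a = ⟨h, x⟩` and `b = ⟨h, u⟩`. The difference `S_K(x) - S_K(u)` is a sum of i.i.d.
log-likelihood ratios of the one-bit observations `s_k`. Given `h`, the observation is `+1` with
probability `Φ(β a)` (because `β √(1/2) = √(ρ/N_t)`), so averaging over the noise turns the
expected ratio into the Bernoulli Kullback–Leibler divergence between `Φ(β a)` and `Φ(β b)`.
This is positive unless `a = b`, and `a ≠ b` on an open nonempty set of channels when `u ≠ x`,
so the mean of each term is positive. The terms are integrable since `|log Φ(t)|` grows at most
quadratically. By the strong law of large numbers, `S_K(x) - S_K(u)` is eventually positive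
almost surely, hence with probability tending to one.
-/

open MeasureTheory ProbabilityTheory Filter
open scoped BigOperators ENNReal

/-- The standard normal cumulative distribution function
`Φ(t) = ∫_{−∞}^{t} (1/√(2π)) e^{−τ²/2} dτ`. -/
noncomputable def stdNormalCDF (t : ℝ) : ℝ :=
  ∫ τ in Set.Iic t, (Real.sqrt (2 * Real.pi))⁻¹ * Real.exp (-τ ^ 2 / 2)

open Set Real
open scoped NNReal

lemma isOpenPosMeasure_gaussianReal (m : ℝ) {v : ℝ≥0} (hv : v ≠ 0) :
    (gaussianReal m v).IsOpenPosMeasure :=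
  (gaussianReal_absolutelyContinuous' m hv).isOpenPosMeasure

lemma stdNormalCDF_eq_integral_gaussianPDFReal (t : ℝ) :
    stdNormalCDF t = ∫ τ in Iic t, gaussianPDFReal 0 1 τ := by
  simp [stdNormalCDF, gaussianPDFReal]

lemma stdNormalCDF_eq_gaussianReal (t : ℝ) :
    stdNormalCDF t = (gaussianReal 0 1).real (Iic t) := by
  rw [measureReal_def, gaussianReal_apply_eq_integral 0 one_ne_zero,
    ENNReal.toReal_ofReal (setIntegral_nonneg measurableSet_Iic
      fun _ _ => gaussianPDFReal_nonneg 0 1 _), stdNormalCDF_eq_integral_gaussianPDFReal]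

lemma stdNormalCDF_strictMono : StrictMono stdNormalCDF := by
  have := isOpenPosMeasure_gaussianReal 0 one_ne_zero
  intro a b hab
  have hIoc : 0 < (gaussianReal 0 1).real (Ioc a b) :=
    ENNReal.toReal_pos (ne_of_gt (lt_of_lt_of_le (isOpen_Ioo.measure_pos _ (nonempty_Ioo.2 hab))
      (measure_mono Ioo_subset_Ioc_self))) (measure_ne_top _ _)
  rw [stdNormalCDF_eq_gaussianReal, stdNormalCDF_eq_gaussianReal, ← Iic_union_Ioc_eq_Iic hab.le,
    measureReal_union (Iic_disjoint_Ioc le_rfl) measurableSet_Ioc]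
  linarith

@[fun_prop]
lemma measurable_stdNormalCDF : Measurable stdNormalCDF :=
  stdNormalCDF_strictMono.monotone.measurable

lemma stdNormalCDF_pos (t : ℝ) : 0 < stdNormalCDF t :=
  (stdNormalCDF_eq_gaussianReal (t - 1) ▸ measureReal_nonneg).trans_lt
    (stdNormalCDF_strictMono (sub_one_lt t))

lemma gaussianReal_real_Ici (t : ℝ) : (gaussianReal 0 1).real (Ici t) = 1 - stdNormalCDF t := by
  have hatom : gaussianReal 0 1 {t} = 0 :=
    (nullSingletonClass_gaussianReal one_ne_zero).measure_singleton t
  rw [stdNormalCDF_eq_gaussianReal, measureReal_congr (Ioi_ae_eq_Ici' hatom).symm, ← compl_Iic,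
    probReal_compl_eq_one_sub measurableSet_Iic]

lemma stdNormalCDF_neg (t : ℝ) : stdNormalCDF (-t) = 1 - stdNormalCDF t := by
  have hsymm : (gaussianReal 0 1).map (fun x => -x) = gaussianReal 0 1 := by
    simpa using gaussianReal_map_neg (μ := 0) (v := 1)
  rw [stdNormalCDF_eq_gaussianReal, ← hsymm,
    map_measureReal_apply measurable_neg measurableSet_Iic,
    show Neg.neg ⁻¹' Iic (-t) = Ici t by ext; simp, gaussianReal_real_Ici]

lemma stdNormalCDF_lt_one (t : ℝ) : stdNormalCDF t < 1 := by
  have := stdNormalCDF_neg (-t)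
  rw [neg_neg] at this
  linarith [stdNormalCDF_pos (-t)]

lemma gaussianReal_real_Ici_neg {v : ℝ≥0} (hv : v ≠ 0) (c : ℝ) :
    (gaussianReal 0 v).real (Ici (-c)) = stdNormalCDF (c / √v) := by
  have hscale : (gaussianReal 0 1).map (√v * ·) = gaussianReal 0 v := by
    rw [gaussianReal_map_const_mul]
    congr 1
    · ring
    · ext; simp
  have hsqrt : 0 < √(v : ℝ) := by positivity
  rw [← hscale, map_measureReal_apply (measurable_const_mul _) measurableSet_Ici,
    show (√v * ·) ⁻¹' Ici (-c) = Ici (-(c / √v)) by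
      ext x; rw [mem_preimage, mem_Ici, mem_Ici, ← neg_div, div_le_iff₀' hsqrt],
    gaussianReal_real_Ici, stdNormalCDF_neg, sub_sub_cancel]

lemma inv_sqrt_two_pi_mul_exp_le_stdNormalCDF (t : ℝ) :
    (√(2 * π))⁻¹ * exp (-(t ^ 2 + 1)) ≤ stdNormalCDF t := by
  have hpdf : ∀ τ ∈ Ioc (t - 1) t,
      (√(2 * π))⁻¹ * exp (-(t ^ 2 + 1)) ≤ gaussianPDFReal 0 1 τ := by
    intro τ ⟨hlo, hhi⟩
    simp only [gaussianPDFReal, NNReal.coe_one, mul_one, sub_zero]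
    gcongr
    nlinarith [sq_nonneg (2 * t - τ), mul_nonneg (sub_nonneg.2 hhi) (sub_nonneg.2 hlo.le)]
  calc (√(2 * π))⁻¹ * exp (-(t ^ 2 + 1))
      ≤ ∫ τ in Ioc (t - 1) t, gaussianPDFReal 0 1 τ := by
        refine le_of_eq_of_le ?_ (setIntegral_mono_on (integrableOn_const measure_Ioc_lt_top.ne)
          (integrable_gaussianPDFReal 0 1).integrableOn measurableSet_Ioc hpdf)
        simp
    _ ≤ stdNormalCDF t := by
        rw [stdNormalCDF_eq_integral_gaussianPDFReal]
        exact setIntegral_mono_set (integrable_gaussianPDFReal 0 1).integrableOn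
          (ae_of_all _ (gaussianPDFReal_nonneg 0 1)) Ioc_subset_Iic_self.eventuallyLE

lemma abs_log_stdNormalCDF_le (t : ℝ) : |log (stdNormalCDF t)| ≤ t ^ 2 + 1 + log √(2 * π) := by
  have hlog := log_le_log (by positivity) (inv_sqrt_two_pi_mul_exp_le_stdNormalCDF t)
  rw [log_mul (by positivity) (exp_pos _).ne', log_inv, log_exp] at hlog
  rw [abs_of_nonpos (log_nonpos (stdNormalCDF_pos t).le (stdNormalCDF_lt_one t).le)]
  linarith

noncomputable def klBernoulli (p q : ℝ) : ℝ :=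
  p * (log p - log q) + (1 - p) * (log (1 - p) - log (1 - q))

lemma klBernoulli_pos {p q : ℝ} (hp0 : 0 < p) (hp1 : p < 1) (hq0 : 0 < q) (hq1 : q < 1)
    (hpq : p ≠ q) : 0 < klBernoulli p q := by
  have hlt : log (q / p) < q / p - 1 :=
    log_lt_sub_one_of_pos (by positivity) (by rwa [ne_eq, div_eq_one_iff_eq hp0.ne', eq_comm])
  have hle : log ((1 - q) / (1 - p)) ≤ (1 - q) / (1 - p) - 1 :=
    log_le_sub_one_of_pos (div_pos (by linarith) (by linarith))
  rw [log_div hq0.ne' hp0.ne'] at hlt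
  rw [log_div (by linarith) (by linarith)] at hle
  have h1 : p * (q / p - 1) = q - p := by field_simp
  have h2 : (1 - p) * ((1 - q) / (1 - p) - 1) = p - q := by
    field_simp [show 1 - p ≠ 0 by linarith]
    ring
  unfold klBernoulli
  nlinarith [mul_lt_mul_of_pos_left hlt hp0,
    mul_le_mul_of_nonneg_left hle (by linarith : 0 ≤ 1 - p)]

lemma klBernoulli_nonneg {p q : ℝ} (hp0 : 0 < p) (hp1 : p < 1) (hq0 : 0 < q) (hq1 : q < 1) :
    0 ≤ klBernoulli p q := by
  rcases eq_or_ne p q with rfl | hpq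
  · simp [klBernoulli]
  · exact (klBernoulli_pos hp0 hp1 hq0 hq1 hpq).le

section LogLikRatio

/-- The log-likelihood ratio, under the probit model `P(s = ±1) = Φ(±β ·)`, of the one-bit
observation `s = sgn(γ a + n)` between the noiseless outputs `a` (true) and `b`. -/
noncomputable def logLikRatio (β γ a b n : ℝ) : ℝ :=
  log (stdNormalCDF (β * (if 0 ≤ γ * a + n then 1 else -1) * a)) -
    log (stdNormalCDF (β * (if 0 ≤ γ * a + n then 1 else -1) * b))

lemma abs_logLikRatio_le (β γ a b n : ℝ) :
    |logLikRatio β γ a b n| ≤ β ^ 2 * (a ^ 2 + b ^ 2) + 2 * (1 + log √(2 * π)) := by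
  have hsq : ∀ c, (β * (if 0 ≤ γ * a + n then 1 else -1) * c) ^ 2 = β ^ 2 * c ^ 2 := by
    intro c; split_ifs <;> ring
  have ha := abs_log_stdNormalCDF_le (β * (if 0 ≤ γ * a + n then 1 else -1) * a)
  have hb := abs_log_stdNormalCDF_le (β * (if 0 ≤ γ * a + n then 1 else -1) * b)
  rw [hsq] at ha hb
  exact (abs_sub _ _).trans (by linarith)

lemma integral_logLikRatio_gaussianReal {v : ℝ≥0} (hv : v ≠ 0) {β γ : ℝ} (hβγ : β * √v = γ)
    (a b : ℝ) :
    ∫ n, logLikRatio β γ a b n ∂gaussianReal 0 v =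
      klBernoulli (stdNormalCDF (β * a)) (stdNormalCDF (β * b)) := by
  have hpiece : (fun n => logLikRatio β γ a b n) = (Ici (-(γ * a))).piecewise
      (fun _ => log (stdNormalCDF (β * a)) - log (stdNormalCDF (β * b)))
      (fun _ => log (stdNormalCDF (-(β * a))) - log (stdNormalCDF (-(β * b)))) := by
    ext n
    by_cases hn : 0 ≤ γ * a + n <;> simp [logLikRatio, hn, Set.piecewise, neg_le_iff_add_nonneg']
  have hprob : (gaussianReal 0 v).real (Ici (-(γ * a))) = stdNormalCDF (β * a) := by
    rw [gaussianReal_real_Ici_neg hv, ← hβγ]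
    field_simp
  rw [hpiece, integral_piecewise measurableSet_Ici (integrableOn_const (measure_ne_top _ _))
    (integrableOn_const (measure_ne_top _ _)), setIntegral_const, setIntegral_const,
    probReal_compl_eq_one_sub measurableSet_Ici, hprob, stdNormalCDF_neg, stdNormalCDF_neg,
    klBernoulli, smul_eq_mul, smul_eq_mul]

variable {E : Type*} [MeasurableSpace E] {μ : Measure E} [IsProbabilityMeasure μ] {a b : E → ℝ}
  {v : ℝ≥0} {β γ : ℝ}

lemma measurable_logLikRatio (ha : Measurable a) (hb : Measurable b) :
    Measurable fun p : E × ℝ => logLikRatio β γ (a p.1) (b p.1) p.2 := by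
  have hsign : Measurable fun p : E × ℝ => if 0 ≤ γ * a p.1 + p.2 then (1 : ℝ) else -1 :=
    Measurable.ite (measurableSet_le measurable_const (by fun_prop)) measurable_const
      measurable_const
  unfold logLikRatio
  fun_prop

lemma integrable_logLikRatio (ha : Measurable a) (hb : Measurable b) (ha2 : MemLp a 2 μ)
    (hb2 : MemLp b 2 μ) :
    Integrable (fun p : E × ℝ => logLikRatio β γ (a p.1) (b p.1) p.2)
      (μ.prod (gaussianReal 0 v)) := by
  have hbound : Integrable (fun p : E × ℝ =>
      β ^ 2 * (a p.1 ^ 2 + b p.1 ^ 2) + 2 * (1 + log √(2 * π))) (μ.prod (gaussianReal 0 v)) :=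
    (((ha2.integrable_sq.add hb2.integrable_sq).comp_fst _).const_mul _).add (integrable_const _)
  exact hbound.mono' (measurable_logLikRatio ha hb).aestronglyMeasurable
    (ae_of_all _ fun p => abs_logLikRatio_le _ _ _ _ _)

lemma integral_logLikRatio_pos (hv : v ≠ 0) (hβ : β ≠ 0) (hβγ : β * √v = γ)
    (ha : Measurable a) (hb : Measurable b) (ha2 : MemLp a 2 μ) (hb2 : MemLp b 2 μ)
    (hab : μ {e | a e ≠ b e} ≠ 0) :
    0 < ∫ p, logLikRatio β γ (a p.1) (b p.1) p.2 ∂(μ.prod (gaussianReal 0 v)) := by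
  have hint := integrable_logLikRatio (β := β) (γ := γ) (v := v) ha hb ha2 hb2
  have hinner : ∀ e, ∫ n, logLikRatio β γ (a e) (b e) n ∂gaussianReal 0 v =
      klBernoulli (stdNormalCDF (β * a e)) (stdNormalCDF (β * b e)) := fun e =>
    integral_logLikRatio_gaussianReal hv hβγ _ _
  have hKLint := hint.integral_prod_left
  simp only [hinner] at hKLint
  rw [integral_prod _ hint]
  simp only [hinner]
  rw [integral_pos_iff_support_of_nonneg (fun e => klBernoulli_nonneg (stdNormalCDF_pos _)
    (stdNormalCDF_lt_one _) (stdNormalCDF_pos _) (stdNormalCDF_lt_one _)) hKLint]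
  refine (pos_iff_ne_zero.2 hab).trans_le (measure_mono fun e he => ?_)
  refine (klBernoulli_pos (stdNormalCDF_pos _) (stdNormalCDF_lt_one _) (stdNormalCDF_pos _)
    (stdNormalCDF_lt_one _) ?_).ne'
  exact fun h => he (mul_left_cancel₀ hβ (stdNormalCDF_strictMono.injective h))

end LogLikRatio

section Projection

variable {ι : Type*} [Fintype ι]

lemma memLp_sum_mul_pi_gaussianReal (m : ℝ) (v : ℝ≥0) (x : ι → ℝ) :
    MemLp (fun h : ι → ℝ => ∑ i, h i * x i) 2 (Measure.pi fun _ => gaussianReal m v) :=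
  memLp_finsetSum _ fun i _ =>
    ((memLp_id_gaussianReal 2).comp_measurePreserving (measurePreserving_eval _ i)).mul_const _

lemma measure_setOf_sum_mul_ne_ne_zero (μ : Measure (ι → ℝ)) [μ.IsOpenPosMeasure]
    {x u : ι → ℝ} (hxu : x ≠ u) :
    μ {h | ∑ i, h i * x i ≠ ∑ i, h i * u i} ≠ 0 := by
  refine (isOpen_ne_fun (by fun_prop) (by fun_prop)).measure_ne_zero μ ⟨x - u, ?_⟩
  have hpos : 0 < ∑ i, (x i - u i) ^ 2 := by
    obtain ⟨i, hi⟩ := Function.ne_iff.1 hxu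
    exact Finset.sum_pos' (fun _ _ => sq_nonneg _) ⟨i, Finset.mem_univ _, by
      simpa [sq_pos_iff, sub_eq_zero] using hi⟩
  have hdiff : ∑ i, (x i - u i) * x i - ∑ i, (x i - u i) * u i = ∑ i, (x i - u i) ^ 2 := by
    rw [← Finset.sum_sub_distrib]
    exact Finset.sum_congr rfl fun _ _ => by ring
  intro h
  simp only [Pi.sub_apply] at h
  linarith

end Projection

lemma tendsto_measure_of_ae_eventually_mem {Ω : Type*} [MeasurableSpace Ω] {P : Measure Ω}
    [IsProbabilityMeasure P] {A : ℕ → Set Ω} (hA : ∀ K, MeasurableSet (A K))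
    (hae : ∀ᵐ ω ∂P, ∀ᶠ K in atTop, ω ∈ A K) :
    Tendsto (fun K => P (A K)) atTop (nhds 1) := by
  simpa [setLIntegral_one] using
    (AECover.mk hae hA).lintegral_tendsto_of_nat (f := fun _ => (1 : ℝ≥0∞)) aemeasurable_const

lemma tendsto_measure_sum_pos_of_integral_pos {Ω E : Type*} [MeasurableSpace Ω]
    [MeasurableSpace E] {P : Measure Ω} [IsProbabilityMeasure P] {μ : Measure E}
    {X : ℕ → Ω → E} (hX : ∀ k, Measurable (X k)) (hind : iIndepFun X P)
    (hlaw : ∀ k, P.map (X k) = μ) {f : E → ℝ} (hf : Measurable f) (hfi : Integrable f μ)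
    (hpos : 0 < ∫ e, f e ∂μ) :
    Tendsto (fun K => P {ω | 0 < ∑ k ∈ Finset.range K, f (X k ω)}) atTop (nhds 1) := by
  have hident : ∀ k, IdentDistrib (f ∘ X k) (f ∘ X 0) P P := fun k =>
    ⟨(hf.comp (hX k)).aemeasurable, (hf.comp (hX 0)).aemeasurable, by
      rw [← Measure.map_map hf (hX k), ← Measure.map_map hf (hX 0), hlaw, hlaw]⟩
  have hmean : ∫ ω, (f ∘ X 0) ω ∂P = ∫ e, f e ∂μ := by
    rw [← hlaw 0, integral_map (hX 0).aemeasurable hf.aestronglyMeasurable]; rfl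
  have hint : Integrable (f ∘ X 0) P := by
    rw [← hlaw 0] at hfi
    exact hfi.comp_measurable (hX 0)
  have hslln := strong_law_ae_real (fun k => f ∘ X k) hint
    (fun i j hij => (hind.indepFun hij).comp hf hf) hident
  refine tendsto_measure_of_ae_eventually_mem
    (fun K => measurableSet_lt measurable_const
      (Finset.measurable_sum _ fun k _ => hf.comp (hX k))) ?_
  filter_upwards [hslln] with ω hω
  filter_upwards [(tendsto_order.1 hω).1 0 (hmean ▸ hpos), eventually_gt_atTop 0] with K hK hK0
  exact (div_pos_iff_of_pos_right (by exact_mod_cast hK0)).1 hK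

theorem loglik_comparison_tendsto_one_general (Ω : Type*) [MeasurableSpace Ω]
    (P : Measure Ω) [IsProbabilityMeasure P] (Nt : ℕ) (hNt : 1 ≤ Nt) (ρ : ℝ) (hρ : 0 < ρ)
    (h : ℕ → Ω → Fin (2 * Nt) → ℝ) (n : ℕ → Ω → ℝ)
    (hhm : ∀ k, Measurable (h k)) (hnm : ∀ k, Measurable (n k))
    (hiid : iIndepFun
      (fun k ω => (h k ω, n k ω)) P)
    (hlaw : ∀ k, P.map (fun ω => (h k ω, n k ω)) =
      (Measure.pi fun _ : Fin (2 * Nt) => gaussianReal 0 (1 / 2)).prod (gaussianReal 0 (1 / 2)))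
    (x u : Fin (2 * Nt) → ℝ) (hne : u ≠ x)
    (s : ℕ → Ω → ℝ)
    (hs : ∀ k ω, s k ω =
      if 0 ≤ Real.sqrt (ρ / Nt) * (∑ i, h k ω i * x i) + n k ω then (1 : ℝ) else -1)
    (S : ℕ → (Fin (2 * Nt) → ℝ) → Ω → ℝ)
    (hS : ∀ K v ω, S K v ω = ∑ k ∈ Finset.range K,
      Real.log (stdNormalCDF (Real.sqrt (2 * ρ / Nt) * s k ω * (∑ i, h k ω i * v i)))) :
    Tendsto (fun K => P {ω | S K x ω > S K u ω}) atTop (nhds 1) := by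
  have hv : (1 / 2 : ℝ≥0) ≠ 0 := by norm_num
  have := isOpenPosMeasure_gaussianReal 0 hv
  have hβ : √(2 * ρ / Nt) ≠ 0 := (sqrt_pos.2 (by positivity)).ne'
  have hβγ : √(2 * ρ / Nt) * √((1 / 2 : ℝ≥0) : ℝ) = √(ρ / Nt) := by
    rw [← sqrt_mul (by positivity)]; congr 1; push_cast; ring
  have hdot : ∀ w : Fin (2 * Nt) → ℝ, Measurable fun h : Fin (2 * Nt) → ℝ => ∑ i, h i * w i :=
    fun w => by fun_prop
  have hx2 := memLp_sum_mul_pi_gaussianReal 0 (1 / 2) x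
  have hu2 := memLp_sum_mul_pi_gaussianReal 0 (1 / 2) u
  have hf := measurable_logLikRatio (β := √(2 * ρ / Nt)) (γ := √(ρ / Nt)) (hdot x) (hdot u)
  have hfi := integrable_logLikRatio (β := √(2 * ρ / Nt)) (γ := √(ρ / Nt)) (v := 1 / 2)
    (hdot x) (hdot u) hx2 hu2
  have hpos := integral_logLikRatio_pos hv hβ hβγ (hdot x) (hdot u) hx2 hu2
    (measure_setOf_sum_mul_ne_ne_zero _ hne.symm)
  convert tendsto_measure_sum_pos_of_integral_pos (fun k => (hhm k).prodMk (hnm k)) hiid hlaw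
    hf hfi hpos using 3 with K
  ext ω
  change S K u ω < S K x ω ↔ _
  rw [← sub_pos, hS, hS, ← Finset.sum_sub_distrib]
  simp only [hs]
  rfl

/-- Lemma 2 (real-domain form): with i.i.d. channel/noise pairs, the sign-refined
log-likelihood sum at the true transmitted vector `x` exceeds that at any other vector `u`
on the sphere with probability tending to one as the number `K` of nodes grows. -/
theorem loglik_comparison_tendsto_one (Ω : Type*) [MeasurableSpace Ω]
    (P : Measure Ω) [IsProbabilityMeasure P] (Nt : ℕ) (hNt : 1 ≤ Nt) (ρ : ℝ) (hρ : 0 < ρ)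
    (h : ℕ → Ω → Fin (2 * Nt) → ℝ) (n : ℕ → Ω → ℝ)
    (hhm : ∀ k, Measurable (h k)) (hnm : ∀ k, Measurable (n k))
    (hiid : iIndepFun
      (fun k ω => (h k ω, n k ω)) P)
    (hlaw : ∀ k, P.map (fun ω => (h k ω, n k ω)) =
      (Measure.pi fun _ : Fin (2 * Nt) => gaussianReal 0 (1 / 2)).prod (gaussianReal 0 (1 / 2)))
    (x u : Fin (2 * Nt) → ℝ) (hx : ∑ i, (x i) ^ 2 = (Nt : ℝ))
    (hu : ∑ i, (u i) ^ 2 = (Nt : ℝ)) (hne : u ≠ x)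
    (s : ℕ → Ω → ℝ)
    (hs : ∀ k ω, s k ω =
      if 0 ≤ Real.sqrt (ρ / Nt) * (∑ i, h k ω i * x i) + n k ω then (1 : ℝ) else -1)
    (S : ℕ → (Fin (2 * Nt) → ℝ) → Ω → ℝ)
    (hS : ∀ K v ω, S K v ω = ∑ k ∈ Finset.range K,
      Real.log (stdNormalCDF (Real.sqrt (2 * ρ / Nt) * s k ω * (∑ i, h k ω i * v i)))) :
    Tendsto (fun K => P {ω | S K x ω > S K u ω}) atTop (nhds 1) :=
  loglik_comparison_tendsto_one_general Ω P Nt hNt ρ hρ h n hhm hnm hiid hlaw x u hne s hs S hS
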